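/- arXiv:2307.11347 — 7 statements merged into one kernel-verified Lean document; each statement's English description precedes it below -/
import Mathlib

section
/- Let C be an ICE-closed subcategory of an abelian category A, and define αC = {A ∈ C | for every morphism f : C' → A with C' ∈ C, the kernel of f belongs to C}. Then: (1) if C ∈ αC and X is a subobject of C belonging to C, then X belongs to αC; and (2) αC is a wide subcategory of A. -/
open CategoryTheory Limits ZeroObject

namespace ICEPaper

variable {A : Type*} [Category A] [Abelian A]

/-- A full additive subcategory (given by its class of objects), closed under isomorphisms. -/
structure IsSubcat (C : Set A) : Prop where
  mem_of_iso : ∀ ⦃X Y : A⦄, (X ≅ Y) → X ∈ C → Y ∈ C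
  zero_mem : (0 : A) ∈ C
  biprod_mem : ∀ ⦃X Y : A⦄, X ∈ C → Y ∈ C → (X ⊞ Y) ∈ C

/-- `C` is closed under extensions. -/
def ClosedUnderExtensions (C : Set A) : Prop :=
  ∀ (S : ShortComplex A), S.ShortExact → S.X₁ ∈ C → S.X₃ ∈ C → S.X₂ ∈ C

/-- `C` is closed under quotients in `A`. -/
def ClosedUnderQuotients (C : Set A) : Prop :=
  ∀ ⦃X Y : A⦄ (f : X ⟶ Y), Epi f → X ∈ C → Y ∈ C

/-- `C` is closed under images. -/
def ClosedUnderImages (C : Set A) : Prop :=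
  ∀ ⦃X Y : A⦄ (f : X ⟶ Y), X ∈ C → Y ∈ C → image f ∈ C

/-- `C` is closed under cokernels. -/
def ClosedUnderCokernels (C : Set A) : Prop :=
  ∀ ⦃X Y : A⦄ (f : X ⟶ Y), X ∈ C → Y ∈ C → cokernel f ∈ C

/-- `C` is closed under kernels. -/
def ClosedUnderKernels (C : Set A) : Prop :=
  ∀ ⦃X Y : A⦄ (f : X ⟶ Y), X ∈ C → Y ∈ C → kernel f ∈ C

/-- `C` is a torsion class in `A`. -/
structure IsTorsionClass (C : Set A) : Prop where
  subcat : IsSubcat C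
  ext : ClosedUnderExtensions C
  quot : ClosedUnderQuotients C

/-- `C` is a wide subcategory of `A`. -/
structure IsWide (C : Set A) : Prop where
  subcat : IsSubcat C
  ext : ClosedUnderExtensions C
  ker : ClosedUnderKernels C
  coker : ClosedUnderCokernels C

/-- `C` is an ICE-closed subcategory of `A`. -/
structure IsICEClosed (C : Set A) : Prop where
  subcat : IsSubcat C
  im : ClosedUnderImages C
  coker : ClosedUnderCokernels C
  ext : ClosedUnderExtensions C

/-- `αC = {X ∈ C ∣ every morphism f : C' ⟶ X with C' ∈ C has ker f ∈ C}`. -/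
def alphaSub (C : Set A) : Set A :=
  {X | X ∈ C ∧ ∀ ⦃C' : A⦄ (f : C' ⟶ X), C' ∈ C → kernel f ∈ C}

/-- `D` is a torsion class in the full (wide, hence abelian) subcategory `W` of `A`:
`D ⊆ W`, and `D` is closed under extensions and quotients inside `W`.
(Here short exact sequences and epimorphisms in the wide subcategory `W` are
exactly those of `A` with terms in `W`.) -/
structure IsTorsionClassIn (W D : Set A) : Prop where
  subset : D ⊆ W
  subcat : IsSubcat D
  ext : ∀ (S : ShortComplex A), S.ShortExact → S.X₁ ∈ D → S.X₃ ∈ D → S.X₂ ∈ D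
  quot : ∀ ⦃X Y : A⦄ (f : X ⟶ Y), Epi f → X ∈ D → Y ∈ W → Y ∈ D

/-- The exactness condition defining narrow sequences: for every exact sequence
`A → B → C → D → E` with `A ∈ C(k−1)`, `B, D ∈ C(k)` and `E ∈ C(k+1)` one has `C ∈ C(k)`. -/
def NarrowCondition (C : ℤ → Set A) : Prop :=
  ∀ (k : ℤ) (S : ComposableArrows A 4), S.Exact →
    S.obj' 0 ∈ C (k - 1) → S.obj' 1 ∈ C k → S.obj' 3 ∈ C k → S.obj' 4 ∈ C (k + 1) →
    S.obj' 2 ∈ C k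

/-- A narrow sequence in `A`. -/
structure IsNarrowSequence (C : ℤ → Set A) : Prop where
  subcat : ∀ k, IsSubcat (C k)
  decreasing : ∀ k, C (k + 1) ⊆ C k
  narrow : NarrowCondition C

/-- An ICE sequence in `A`. -/
structure IsICESequence (C : ℤ → Set A) : Prop where
  ice : ∀ k, IsICEClosed (C k)
  tors : ∀ k, IsTorsionClassIn (alphaSub (C k)) (C (k + 1))

/-- The zero subcategory. -/
def zeroSubcat : Set A := {X | IsZero X}

/-! Membership in `αC` passes to subobjects lying in `C`, because composing with a monomorphism
does not change kernels; this gives (1), closure under isomorphisms and closure under kernels.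
For an extension `0 ⟶ X₁ ⟶ X₂ ⟶ X₃ ⟶ 0` with ends in `αC` and `f : C' ⟶ X₂`, the map
`ker (f ≫ g) ⟶ X₂` induced by `f` factors through `X₁` and has the same kernel as `f`; this
gives closure under extensions and direct sums. For cokernels of `f : X ⟶ Y`, pull a map
`g : C' ⟶ coker f` back along `Y ⟶ coker f`: the pullback is an extension of `C'` by `im f`,
hence lies in `C`, and its projection to `Y` has the same kernel as `g`. -/

section

variable {C : Set A}

noncomputable def kernelKernelιCompIso {X Y Z : A} (f : X ⟶ Y) (p : Y ⟶ Z) :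
    kernel (kernel.ι (f ≫ p) ≫ f) ≅ kernel f where
  hom := kernel.lift f (kernel.ι _ ≫ kernel.ι (f ≫ p)) (by simp)
  inv := kernel.lift _ (kernel.lift (f ≫ p) (kernel.ι f) (by simp)) (by simp)

theorem IsSubcat.mem_alphaSub_of_mono (hC : IsSubcat C) {X Y : A} (i : X ⟶ Y) [Mono i]
    (hY : Y ∈ alphaSub C) (hX : X ∈ C) : X ∈ alphaSub C :=
  ⟨hX, fun _ f hC' => hC.mem_of_iso (kernelCompMono f i) (hY.2 (f ≫ i) hC')⟩

theorem IsSubcat.kernel_mem_of_shortExact (hC : IsSubcat C) {S : ShortComplex A}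
    (hS : S.ShortExact) (h₁ : S.X₁ ∈ alphaSub C) (h₃ : S.X₃ ∈ alphaSub C) {C' : A}
    (f : C' ⟶ S.X₂) (hC' : C' ∈ C) : kernel f ∈ C := by
  have := hS.mono_f
  obtain ⟨h, hh⟩ := hS.exact.lift' (kernel.ι (f ≫ S.g) ≫ f) (by simp)
  exact hC.mem_of_iso
    ((kernelCompMono h S.f).symm ≪≫ kernelIsoOfEq hh ≪≫ kernelKernelιCompIso f S.g)
    (h₁.2 h (h₃.2 (f ≫ S.g) hC'))

theorem IsSubcat.isSubcat_alphaSub (hC : IsSubcat C) : IsSubcat (alphaSub C) where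
  mem_of_iso _ _ e hX := hC.mem_alphaSub_of_mono e.inv hX (hC.mem_of_iso e hX.1)
  zero_mem := ⟨hC.zero_mem, fun _ f hC' => by
    rw [(isZero_zero A).eq_of_tgt f 0]
    exact hC.mem_of_iso kernelZeroIsoSource.symm hC'⟩
  biprod_mem X Y hX hY := ⟨hC.biprod_mem hX.1 hY.1, fun _ f hC' =>
    hC.kernel_mem_of_shortExact (ShortComplex.Splitting.ofHasBinaryBiproduct X Y).shortExact
      hX hY f hC'⟩

theorem IsSubcat.closedUnderExtensions_alphaSub (hC : IsSubcat C)
    (hext : ClosedUnderExtensions C) : ClosedUnderExtensions (alphaSub C) :=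
  fun S hS h₁ h₃ =>
    ⟨hext S hS h₁.1 h₃.1, fun _ f hC' => hC.kernel_mem_of_shortExact hS h₁ h₃ f hC'⟩

theorem IsSubcat.closedUnderKernels_alphaSub (hC : IsSubcat C) :
    ClosedUnderKernels (alphaSub C) :=
  fun _ _ f hX hY => hC.mem_alphaSub_of_mono (kernel.ι f) hX (hY.2 f hX.1)

theorem IsICEClosed.closedUnderCokernels_alphaSub (hC : IsICEClosed C) :
    ClosedUnderCokernels (alphaSub C) := by
  intro X Y f hX hY
  refine ⟨hC.coker f hX.1 hY.1, fun C' g hC' => ?_⟩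
  have sq := IsPullback.of_hasPullback (cokernel.π f) g
  have := isIso_kernel_map_of_isPullback sq
  have := isIso_kernel_map_of_isPullback sq.flip
  have hkerπ : kernel (cokernel.π f) ∈ C :=
    hC.subcat.mem_of_iso (Abelian.imageIsoImage f).symm (hC.im f hX.1 hY.1)
  have hP : pullback (cokernel.π f) g ∈ C :=
    hC.ext (ShortComplex.mk _ _ (kernel.condition (pullback.snd (cokernel.π f) g)))
      ⟨ShortComplex.exact_of_f_is_kernel _ (kernelIsKernel _)⟩
      (hC.subcat.mem_of_iso (asIso (kernel.map _ _ _ _ sq.flip.w)).symm hkerπ) hC'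
  exact hC.subcat.mem_of_iso (asIso (kernel.map _ _ _ _ sq.w)) (hY.2 _ hP)

end

/-- **Proposition (Ingalls–Thomas, Enomoto).**
Let `C` be an ICE-closed subcategory of an abelian category `A` and
`αC = {X ∈ C ∣ ker f ∈ C for every f : C' ⟶ X with C' ∈ C}`. Then
(1) if `C₀ ∈ αC` and `X` is a subobject of `C₀` belonging to `C`, then `X ∈ αC`;
(2) `αC` is a wide subcategory of `A`. -/
theorem alphaSub_of_ICEClosed {A : Type*} [Category A] [Abelian A]
    {C : Set A} (hC : IsICEClosed C) :
    (∀ ⦃X C₀ : A⦄ (i : X ⟶ C₀), Mono i → C₀ ∈ alphaSub C → X ∈ C → X ∈ alphaSub C) ∧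
      IsWide (alphaSub C) :=
  ⟨fun _ _ i _ hC₀ hX => hC.subcat.mem_alphaSub_of_mono i hC₀ hX,
    ⟨hC.subcat.isSubcat_alphaSub, hC.subcat.closedUnderExtensions_alphaSub hC.ext,
      hC.subcat.closedUnderKernels_alphaSub, hC.closedUnderCokernels_alphaSub⟩⟩

end ICEPaper
end

section
/- Let {C(k)}_{k∈ℤ} be a sequence of subcategories of an abelian category A satisfying C(k+1) ⊆ C(k) for all k ∈ ℤ. Then {C(k)}_{k∈ℤ} is a narrow sequence if and only if: (1) C(k) is closed under extensions in A for every k ∈ ℤ, and (2) for every k ∈ ℤ and every morphism f : A → B with A ∈ C(k) and B ∈ C(k+1), one has ker f ∈ C(k) and coker f ∈ C(k+1). -/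
open CategoryTheory Limits ZeroObject

namespace ICEPaper

variable {A : Type*} [Category A] [Abelian A]

/-! An exact sequence `X₀ → X₁ → X₂ → X₃ → X₄` splices into the short exact sequence
`0 → coker (X₀ → X₁) → X₂ → ker (X₃ → X₄) → 0`; by (2) its outer terms lie in `C(k)` when
`X₀ ∈ C(k-1)`, `X₁, X₃ ∈ C(k)`, `X₄ ∈ C(k+1)`, so (1) gives `X₂ ∈ C(k)`. Conversely, (1) and (2)
are the narrow condition applied to the sequences `0 → X₁ → X₂ → X₃ → 0`, `0 → 0 → ker f → X → Y`
and `X → Y → coker f → 0 → 0`. -/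

section

variable {X₀ X₁ X₂ X₃ X₄ : A}

lemma exact_of_epi_comp_of_comp_mono {Y₀ Y₂ : A} {p : Y₀ ⟶ X₀} {f : X₀ ⟶ X₁} {g : X₁ ⟶ X₂}
    {m : X₂ ⟶ Y₂} [Epi p] [Mono m] (w : f ≫ g = 0)
    (h : (ShortComplex.mk (p ≫ f) (g ≫ m) (by simp [reassoc_of% w])).Exact) :
    (ShortComplex.mk f g w).Exact := by
  let S : ShortComplex A := ShortComplex.mk f (g ≫ m) (by simp [reassoc_of% w])
  have hS : S.Exact := (ShortComplex.exact_iff_of_epi_of_isIso_of_mono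
    (S₁ := ShortComplex.mk _ _ _) (S₂ := S)
    { τ₁ := p, τ₂ := 𝟙 _, τ₃ := 𝟙 _, comm₁₂ := by simp [S] }).1 h
  exact (ShortComplex.exact_iff_of_epi_of_isIso_of_mono
    (S₁ := ShortComplex.mk f g w) (S₂ := S)
    { τ₁ := 𝟙 _, τ₂ := 𝟙 _, τ₃ := m, comm₂₃ := by simp [S] }).2 hS

lemma exact_mk₄ {f : X₀ ⟶ X₁} {g : X₁ ⟶ X₂} {h : X₂ ⟶ X₃} {i : X₃ ⟶ X₄}
    (wfg : f ≫ g = 0) (wgh : g ≫ h = 0) (whi : h ≫ i = 0)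
    (hfg : (ShortComplex.mk f g wfg).Exact) (hgh : (ShortComplex.mk g h wgh).Exact)
    (hhi : (ShortComplex.mk h i whi).Exact) : (ComposableArrows.mk₄ f g h i).Exact :=
  ComposableArrows.exact_of_δ₀ (ComposableArrows.exact₂_mk _ wfg hfg)
    (ComposableArrows.exact_of_δ₀ (ComposableArrows.exact₂_mk _ wgh hgh)
      (ComposableArrows.exact₂_mk _ whi hhi))

lemma exact_mk₄_of_shortExact {S : ShortComplex A} (hS : S.ShortExact) :
    (ComposableArrows.mk₄ (0 : 0 ⟶ S.X₁) S.f S.g (0 : S.X₃ ⟶ 0)).Exact :=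
  exact_mk₄ zero_comp S.zero comp_zero ((ShortComplex.exact_iff_mono _ rfl).2 hS.mono_f) hS.exact
    ((ShortComplex.exact_iff_epi _ rfl).2 hS.epi_g)

lemma exact_mk₄_kernel (f : X₀ ⟶ X₁) :
    (ComposableArrows.mk₄ (0 : (0 : A) ⟶ 0) 0 (kernel.ι f) f).Exact :=
  exact_mk₄ zero_comp zero_comp (kernel.condition f)
    (ShortComplex.exact_of_isZero_X₂ _ (isZero_zero A))
    ((ShortComplex.exact_iff_mono _ rfl).2 inferInstance)
    (ShortComplex.exact_of_f_is_kernel _ (kernelIsKernel f))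

lemma exact_mk₄_cokernel (f : X₀ ⟶ X₁) :
    (ComposableArrows.mk₄ f (cokernel.π f) 0 (0 : (0 : A) ⟶ 0)).Exact :=
  exact_mk₄ (cokernel.condition f) comp_zero comp_zero
    (ShortComplex.exact_of_g_is_cokernel _ (cokernelIsCokernel f))
    ((ShortComplex.exact_iff_epi _ rfl).2 inferInstance)
    (ShortComplex.exact_of_isZero_X₂ _ (isZero_zero A))

section CokernelKernel

variable {f : X₀ ⟶ X₁} {g : X₁ ⟶ X₂} {h : X₂ ⟶ X₃} {i : X₃ ⟶ X₄}
  (wfg : f ≫ g = 0) (wgh : g ≫ h = 0) (whi : h ≫ i = 0)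

noncomputable def cokernelKernelComplex : ShortComplex A where
  f := cokernel.desc f g wfg
  g := kernel.lift i h whi
  zero := by ext; simp [wgh]

lemma shortExact_cokernelKernelComplex (hfg : (ShortComplex.mk f g wfg).Exact)
    (hgh : (ShortComplex.mk g h wgh).Exact) (hhi : (ShortComplex.mk h i whi).Exact) :
    (cokernelKernelComplex wfg wgh whi).ShortExact where
  exact := exact_of_epi_comp_of_comp_mono (p := cokernel.π f) (m := kernel.ι i) _
    (by simpa using hgh)
  mono_f := hfg.mono_cokernelDesc
  epi_g := hhi.epi_kernelLift

end CokernelKernel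

end

theorem narrowCondition_iff_general {A : Type*} [Category A] [Abelian A]
    (C : ℤ → Set A) (hsub : ∀ k, IsSubcat (C k)) :
    NarrowCondition C ↔
      ((∀ k, ClosedUnderExtensions (C k)) ∧
        ∀ (k : ℤ) ⦃X Y : A⦄ (f : X ⟶ Y), X ∈ C k → Y ∈ C (k + 1) →
          kernel f ∈ C k ∧ cokernel f ∈ C (k + 1)) := by
  have zero_mem k : (0 : A) ∈ C k := (hsub k).zero_mem
  constructor
  · intro hC
    refine ⟨fun k S hS h₁ h₃ =>
      hC k _ (exact_mk₄_of_shortExact hS) (zero_mem _) h₁ h₃ (zero_mem _),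
      fun k X Y f hX hY => ⟨?_, ?_⟩⟩
    · exact hC k _ (exact_mk₄_kernel f) (zero_mem _) (zero_mem _) hX hY
    · exact hC (k + 1) _ (exact_mk₄_cokernel f) (by rwa [add_sub_cancel_right]) hY (zero_mem _)
        (zero_mem _)
  · rintro ⟨hext, hkercoker⟩ k S hS h₀ h₁ h₃ h₄
    have hcoker : cokernel (S.map' 0 1) ∈ C k := by
      simpa using (hkercoker (k - 1) _ h₀ (by simpa using h₁)).2
    exact hext k _ (shortExact_cokernelKernelComplex _ _ _ (hS.exact 0) (hS.exact 1) (hS.exact 2))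
      hcoker (hkercoker k _ h₃ h₄).1

/-- **Proposition (characterization of narrow sequences).**
Let `{C(k)}_{k∈ℤ}` be a sequence of subcategories of an abelian category `A` with
`C(k+1) ⊆ C(k)` for all `k`. Then it is a narrow sequence if and only if
(1) each `C(k)` is closed under extensions, and
(2) for every `k` and every morphism `f : X ⟶ Y` with `X ∈ C(k)` and `Y ∈ C(k+1)`,
one has `ker f ∈ C(k)` and `coker f ∈ C(k+1)`. -/
theorem narrowCondition_iff {A : Type*} [Category A] [Abelian A]
    (C : ℤ → Set A) (hsub : ∀ k, IsSubcat (C k)) (hdec : ∀ k, C (k + 1) ⊆ C k) :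
    NarrowCondition C ↔
      ((∀ k, ClosedUnderExtensions (C k)) ∧
        ∀ (k : ℤ) ⦃X Y : A⦄ (f : X ⟶ Y), X ∈ C k → Y ∈ C (k + 1) →
          kernel f ∈ C k ∧ cokernel f ∈ C (k + 1)) :=
  narrowCondition_iff_general C hsub

end ICEPaper
end

section
/- Let U be a homology-determined preaisle in D. Then H^k U = U[k] ∩ H holds for every k ∈ ℤ. In particular, H^k U is closed under extensions in H. -/
open CategoryTheory Limits ZeroObject

namespace ICEPaper

section Approximations

variable {C : Type*} [Category C]

/-- A subcategory `B` (given by its class of objects) of a category is contravariantly finite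
if every object admits a right `B`-approximation. -/
def ContravariantlyFinite (B : Set C) : Prop :=
  ∀ X : C, ∃ (B₀ : C) (_ : B₀ ∈ B) (f : B₀ ⟶ X),
    ∀ (B' : C) (_ : B' ∈ B) (g : B' ⟶ X), ∃ h : B' ⟶ B₀, h ≫ f = g

/-- Dually, `B` is covariantly finite if every object admits a left `B`-approximation. -/
def CovariantlyFinite (B : Set C) : Prop :=
  ∀ X : C, ∃ (B₀ : C) (_ : B₀ ∈ B) (f : X ⟶ B₀),
    ∀ (B' : C) (_ : B' ∈ B) (g : X ⟶ B'), ∃ h : B₀ ⟶ B', f ≫ h = g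

end Approximations

open Pretriangulated Triangulated

variable {D : Type*} [Category D] [Preadditive D] [HasZeroObject D] [HasShift D ℤ]
  [∀ n : ℤ, (shiftFunctor D n).Additive] [Pretriangulated D]

/-- The shifted subcategory `U[k] = {X ∣ X⟦-k⟧ ∈ U}`. -/
def shiftSet (U : Set D) (k : ℤ) : Set D := {X : D | X⟦(-k)⟧ ∈ U}

/-- A preaisle: a subcategory (full, iso-closed, containing `0`) closed under extensions and
positive shifts. -/
structure IsPreaisle (U : Set D) : Prop where
  mem_of_iso : ∀ ⦃X Y : D⦄, (X ≅ Y) → X ∈ U → Y ∈ U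
  zero_mem : (0 : D) ∈ U
  ext : ∀ (T : Triangle D), T ∈ (distTriang D) → T.obj₁ ∈ U → T.obj₃ ∈ U → T.obj₂ ∈ U
  shift : ∀ ⦃X : D⦄, X ∈ U → X⟦(1 : ℤ)⟧ ∈ U

/-- A thick subcategory: a triangulated subcategory closed under direct summands. -/
structure IsThick (E : Set D) : Prop where
  mem_of_iso : ∀ ⦃X Y : D⦄, (X ≅ Y) → X ∈ E → Y ∈ E
  zero_mem : (0 : D) ∈ E
  ext : ∀ (T : Triangle D), T ∈ (distTriang D) → T.obj₁ ∈ E → T.obj₃ ∈ E → T.obj₂ ∈ E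
  shift : ∀ ⦃X : D⦄ (k : ℤ), X ∈ E → X⟦k⟧ ∈ E
  summand : ∀ ⦃X Y : D⦄ (i : X ⟶ Y) (r : Y ⟶ X), i ≫ r = 𝟙 X → Y ∈ E → X ∈ E

variable (t : TStructure D)

/-- `D^{≤n}` as a set of objects. -/
def DLE (n : ℤ) : Set D := {X : D | t.le n X}

/-- `D^{≥n}` as a set of objects. -/
def DGE (n : ℤ) : Set D := {X : D | t.ge n X}

/-- The heart `D^{≤0} ∩ D^{≥0}` of the t-structure, as a set of objects of `D`. -/
def heartSet : Set D := {X : D | t.le 0 X ∧ t.ge 0 X}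

/-- The t-structure `t` is bounded. -/
def BoundedT : Prop := ∀ X : D, (∃ n : ℤ, t.le n X) ∧ (∃ n : ℤ, t.ge n X)

/-- The t-structure `t` is nondegenerate. -/
def NonDegenerateT : Prop :=
  (∀ X : D, (∀ n : ℤ, t.le n X) → IsZero X) ∧ (∀ X : D, (∀ n : ℤ, t.ge n X) → IsZero X)

/-- `U` is an aisle: it is the aisle (`D'^{≤0}`) of some t-structure on `D`. -/
def IsAisle (U : Set D) : Prop := ∃ t' : TStructure D, U = DLE t' 0

/-- Data realizing the heart of the t-structure `t` as an abelian category `A`: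
a fully faithful additive functor `ι : A ⥤ D` with essential image the heart of `t`,
identifying short exact sequences in `A` with distinguished triangles of `D` with all three
objects in the heart, together with the associated cohomological functor `H⁰ : D ⥤ A`
(characterized by being homological, restricting to the identity on the heart, and the
standard vanishing on `D^{≤n}` and `D^{≥n}`). -/
structure HeartData (A : Type*) [Category A] [Abelian A] where
  ι : A ⥤ D
  full : ι.Full
  faithful : ι.Faithful
  additive : ι.Additive
  mem_heart : ∀ Y : A, ι.obj Y ∈ heartSet t
  heart_mem : ∀ X : D, X ∈ heartSet t → ∃ Y : A, Nonempty (ι.obj Y ≅ X)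
  shortExact_iff : ∀ S : ShortComplex A, S.ShortExact ↔
    ∃ h : ι.obj S.X₃ ⟶ (ι.obj S.X₁)⟦(1 : ℤ)⟧,
      Triangle.mk (ι.map S.f) (ι.map S.g) h ∈ distTriang D
  H0 : D ⥤ A
  homological : H0.IsHomological
  H0_additive : H0.Additive
  heartIso : ι ⋙ H0 ≅ 𝟭 A
  LE_vanish : ∀ (X : D) (n k : ℤ), t.le n X → n < k → IsZero (H0.obj (X⟦k⟧))
  GE_vanish : ∀ (X : D) (n k : ℤ), t.ge n X → k < n → IsZero (H0.obj (X⟦k⟧))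

variable {t} {A : Type*} [Category A] [Abelian A] (hd : HeartData t A)

/-- The cohomology `H^k = H⁰ ∘ ⟦k⟧`, on objects. -/
def HeartData.H (k : ℤ) (X : D) : A := hd.H0.obj (X⟦k⟧)

/-- `U ⊆ D` is homology-determined: `X ∈ U` iff `H^k X ∈ U[k]` for all `k ∈ ℤ`. -/
def IsHomDet (U : Set D) : Prop :=
  ∀ X : D, X ∈ U ↔ ∀ k : ℤ, hd.ι.obj (hd.H k X) ∈ shiftSet U k

/-- `H^k U`, the image of `U` under `H^k`, as a subcategory of the heart `A`
(closed under isomorphisms). -/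
def HkSet (U : Set D) (k : ℤ) : Set A := {Y : A | ∃ X ∈ U, Nonempty (Y ≅ hd.H k X)}

/-- `θ(C) = {X ∈ D ∣ H^k X ∈ C(k) for all k ∈ ℤ}`. -/
def thetaSet (C : ℤ → Set A) : Set D := {X : D | ∀ k : ℤ, hd.H k X ∈ C k}

/-- `E ⊆ D` is `H⁰`-stable: `H⁰ X ∈ E` for every `X ∈ E`. -/
def H0Stable (E : Set D) : Prop := ∀ X ∈ E, hd.ι.obj (hd.H 0 X) ∈ E

theorem IsPreaisle.shiftSet {U : Set D} (hU : IsPreaisle U) (k : ℤ) :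
    IsPreaisle (shiftSet U k) where
  mem_of_iso _ _ e hX := hU.mem_of_iso ((shiftFunctor D (-k)).mapIso e) hX
  zero_mem := hU.mem_of_iso (shiftFunctor D (-k)).mapZeroObject.symm hU.zero_mem
  ext T hT h₁ h₃ := hU.ext _ (Triangle.shift_distinguished T hT (-k)) h₁ h₃
  shift X hX := hU.mem_of_iso ((shiftFunctorComm D (-k) 1).app X) (hU.shift hX)

theorem IsPreaisle.closedUnderExtensions_heart {V : Set D} (hV : IsPreaisle V) :
    ClosedUnderExtensions {Y : A | hd.ι.obj Y ∈ V} := by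
  intro S hS h₁ h₃
  obtain ⟨_, hT⟩ := (hd.shortExact_iff S).mp hS
  exact hV.ext _ hT h₁ h₃

def HeartData.hShiftNegIso (Y : A) (k : ℤ) : hd.H k ((hd.ι.obj Y)⟦-k⟧) ≅ Y :=
  hd.H0.mapIso (shiftNegShift (hd.ι.obj Y) k) ≪≫ hd.heartIso.app Y

theorem HeartData.subset_HkSet (U : Set D) (k : ℤ) :
    {Y : A | hd.ι.obj Y ∈ shiftSet U k} ⊆ HkSet hd U k :=
  fun Y hY => ⟨(hd.ι.obj Y)⟦-k⟧, hY, ⟨(hd.hShiftNegIso Y k).symm⟩⟩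

variable {hd} in
theorem IsHomDet.HkSet_subset {U : Set D} (hdet : IsHomDet hd U) (hU : IsPreaisle U) (k : ℤ) :
    HkSet hd U k ⊆ {Y : A | hd.ι.obj Y ∈ shiftSet U k} := by
  rintro Y ⟨X, hX, ⟨e⟩⟩
  exact (hU.shiftSet k).mem_of_iso (hd.ι.mapIso e).symm ((hdet X).mp hX k)

/-- **Proposition.** Let `U` be a homology-determined preaisle in `D`. Then
`H^k U = U[k] ∩ H` holds for every `k ∈ ℤ`; in particular `H^k U` is closed under
extensions in the heart `H`. -/
theorem HkSet_eq_shiftSet_inter_heart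
    {D : Type*} [Category D] [Preadditive D] [HasZeroObject D] [HasShift D ℤ]
    [∀ n : ℤ, (shiftFunctor D n).Additive] [Pretriangulated D]
    {t : Triangulated.TStructure D} {A : Type*} [Category A] [Abelian A]
    (hd : HeartData t A) {U : Set D} (hU : IsPreaisle U) (hdet : IsHomDet hd U) :
    (∀ k : ℤ, HkSet hd U k = {Y : A | hd.ι.obj Y ∈ shiftSet U k}) ∧
      ∀ k : ℤ, ClosedUnderExtensions (HkSet hd U k) := by
  have hHk : ∀ k : ℤ, HkSet hd U k = {Y : A | hd.ι.obj Y ∈ shiftSet U k} := fun k =>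
    (hdet.HkSet_subset hU k).antisymm (hd.subset_HkSet U k)
  refine ⟨hHk, fun k => ?_⟩
  rw [hHk k]
  exact (hU.shiftSet k).closedUnderExtensions_heart hd

end ICEPaper
end

section
/- Let C = {C(k)}_{k∈ℤ} be a narrow sequence in the heart H. Then the subcategory θ(C) = {X ∈ D | H^k X ∈ C(k) for all k ∈ ℤ} is a homology-determined preaisle in D. -/
/-!
Closure of `θ(C)` under extensions is the narrow condition applied to the piece
`H^{k-1} Z → H^k X → H^k Y → H^k Z → H^{k+1} X` of the long exact cohomology sequence of a
triangle `X → Y → Z → X[1]`; closure under `[1]` is `H^k (X[1]) ≅ H^{k+1} X` together with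
`C(k+1) ⊆ C(k)`. Homology-determinedness holds because an object `Y` of the heart has the
single nonzero cohomology `H^k (Y[-k]) ≅ Y`, so `Y ∈ θ(C)[k]` iff `Y ∈ C(k)`.
-/

open CategoryTheory Limits ZeroObject

namespace ICEPaper

open Pretriangulated Triangulated

variable {D : Type*} [Category D] [Preadditive D] [HasZeroObject D] [HasShift D ℤ]
  [∀ n : ℤ, (shiftFunctor D n).Additive] [Pretriangulated D]

variable (t : TStructure D)

variable {t} {A : Type*} [Category A] [Abelian A] (hd : HeartData t A)

lemma IsSubcat.mem_of_isZero {C : Set A} (hC : IsSubcat C) {Y : A} (hY : IsZero Y) : Y ∈ C :=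
  hC.mem_of_iso hY.isoZero.symm hC.zero_mem

/-- The five-term piece `H^{k-1} Z → H^k X → H^k Y → H^k Z → H^{k+1} X` of the long exact
sequence of a distinguished triangle `X → Y → Z → X⟦1⟧`. -/
lemma _root_.CategoryTheory.Functor.homologySequence_mk₄_exact (F : D ⥤ A) [F.IsHomological]
    [F.ShiftSequence ℤ] (T : Triangle D) (hT : T ∈ distTriang D) (k : ℤ) :
    (ComposableArrows.mk₄ (F.homologySequenceδ T (k - 1) k (by ring)) ((F.shift k).map T.mor₁)
      ((F.shift k).map T.mor₂) (F.homologySequenceδ T k (k + 1) rfl)).Exact :=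
  ComposableArrows.exact_of_δ₀
    (F.homologySequence_exact₁ T hT _ _ (sub_add_cancel k 1)).exact_toComposableArrows
    (ComposableArrows.exact_of_δ₀ (F.homologySequence_exact₂ T hT k).exact_toComposableArrows
      (F.homologySequence_exact₃ T hT k _ rfl).exact_toComposableArrows)

lemma NarrowCondition.shift_obj₂_mem {C : ℤ → Set A} (hC : NarrowCondition C)
    (F : D ⥤ A) [F.IsHomological] [F.ShiftSequence ℤ] (T : Triangle D) (hT : T ∈ distTriang D)
    (h₁ : ∀ k, (F.shift k).obj T.obj₁ ∈ C k) (h₃ : ∀ k, (F.shift k).obj T.obj₃ ∈ C k) (k : ℤ) :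
    (F.shift k).obj T.obj₂ ∈ C k :=
  hC k _ (F.homologySequence_mk₄_exact T hT k) (h₃ (k - 1)) (h₁ k) (h₃ k) (h₁ (k + 1))

namespace HeartData

def HShiftIso (X : D) (n k : ℤ) : hd.H k (X⟦n⟧) ≅ hd.H (n + k) X :=
  hd.H0.mapIso ((shiftFunctorAdd' D n k (n + k) rfl).app X).symm

def HShiftNegιIso (Y : A) (k : ℤ) : hd.H k ((hd.ι.obj Y)⟦-k⟧) ≅ Y :=
  hd.HShiftIso _ _ k ≪≫ eqToIso (by rw [neg_add_cancel]; rfl) ≪≫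
    hd.H0.mapIso ((shiftFunctorZero D ℤ).app _) ≪≫ hd.heartIso.app Y

lemma isZero_H_ι (Y : A) {j : ℤ} (hj : j ≠ 0) : IsZero (hd.H j (hd.ι.obj Y)) := by
  rcases hj.lt_or_gt with hneg | hpos
  · exact hd.GE_vanish _ 0 j (hd.mem_heart Y).2 hneg
  · exact hd.LE_vanish _ 0 j (hd.mem_heart Y).1 hpos

end HeartData

section Theta

variable {C : ℤ → Set A}

lemma thetaSet_mem_of_iso (hC : ∀ k, IsSubcat (C k)) {X Y : D} (e : X ≅ Y)
    (hX : X ∈ thetaSet hd C) : Y ∈ thetaSet hd C :=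
  fun k => (hC k).mem_of_iso (hd.H0.mapIso ((shiftFunctor D k).mapIso e)) (hX k)

lemma zero_mem_thetaSet (hC : ∀ k, IsSubcat (C k)) : (0 : D) ∈ thetaSet hd C := by
  have := hd.H0_additive
  exact fun k => (hC k).mem_of_isZero
    (hd.H0.map_isZero ((shiftFunctor D k).map_isZero (isZero_zero D)))

lemma shift_mem_thetaSet (hC : ∀ k, IsSubcat (C k)) (hdec : ∀ k, C (k + 1) ⊆ C k) {X : D}
    (hX : X ∈ thetaSet hd C) : X⟦(1 : ℤ)⟧ ∈ thetaSet hd C :=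
  fun k => (hC k).mem_of_iso (hd.HShiftIso X 1 k).symm (hdec k (add_comm k 1 ▸ hX (k + 1)))

lemma thetaSet_ext (hC : NarrowCondition C) (T : Triangle D) (hT : T ∈ distTriang D)
    (h₁ : T.obj₁ ∈ thetaSet hd C) (h₃ : T.obj₃ ∈ thetaSet hd C) : T.obj₂ ∈ thetaSet hd C := by
  have := hd.homological
  let : hd.H0.ShiftSequence ℤ := Functor.ShiftSequence.tautological _ _
  exact hC.shift_obj₂_mem hd.H0 T hT h₁ h₃

lemma isPreaisle_thetaSet (hC : IsNarrowSequence C) : IsPreaisle (thetaSet hd C) where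
  mem_of_iso _ _ := thetaSet_mem_of_iso hd hC.subcat
  zero_mem := zero_mem_thetaSet hd hC.subcat
  ext := thetaSet_ext hd hC.narrow
  shift _ := shift_mem_thetaSet hd hC.subcat hC.decreasing

lemma ι_mem_shiftSet_thetaSet_iff (hC : ∀ k, IsSubcat (C k)) (Y : A) (k : ℤ) :
    hd.ι.obj Y ∈ shiftSet (thetaSet hd C) k ↔ Y ∈ C k := by
  refine ⟨fun hY => (hC k).mem_of_iso (hd.HShiftNegιIso Y k) (hY k), fun hY m => ?_⟩
  by_cases hmk : m = k
  · subst hmk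
    exact (hC m).mem_of_iso (hd.HShiftNegιIso Y m).symm hY
  · exact (hC m).mem_of_isZero ((hd.isZero_H_ι Y (by omega)).of_iso (hd.HShiftIso _ _ m))

lemma isHomDet_thetaSet (hC : ∀ k, IsSubcat (C k)) : IsHomDet hd (thetaSet hd C) :=
  fun _ => forall_congr' fun k => (ι_mem_shiftSet_thetaSet_iff hd hC _ k).symm

end Theta

/-- **Proposition.** If `C = {C(k)}_{k∈ℤ}` is a narrow sequence in the heart `H`, then
`θ(C) = {X ∈ D ∣ H^k X ∈ C(k) for all k}` is a homology-determined preaisle in `D`. -/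
theorem isPreaisle_isHomDet_thetaSet_of_narrow
    {D : Type*} [Category D] [Preadditive D] [HasZeroObject D] [HasShift D ℤ]
    [∀ n : ℤ, (shiftFunctor D n).Additive] [Pretriangulated D]
    {t : Triangulated.TStructure D} {A : Type*} [Category A] [Abelian A]
    (hd : HeartData t A) {C : ℤ → Set A} (hC : IsNarrowSequence C) :
    IsPreaisle (thetaSet hd C) ∧ IsHomDet hd (thetaSet hd C) :=
  ⟨isPreaisle_thetaSet hd hC, isHomDet_thetaSet hd hC.subcat⟩

end ICEPaper
end

section
/- Let U be a homology-determined preaisle in D. Then the sequence μ(U) = {C(k)}_{k∈ℤ} of subcategories of H defined by C(k) = H^k U is a narrow sequence in H. -/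
open CategoryTheory Limits ZeroObject

namespace ICEPaper

open Pretriangulated Triangulated

variable {D : Type*} [Category D] [Preadditive D] [HasZeroObject D] [HasShift D ℤ]
  [∀ n : ℤ, (shiftFunctor D n).Additive] [Pretriangulated D]

variable (t : TStructure D)

variable {t} {A : Type*} [Category A] [Abelian A] (hd : HeartData t A)

/-!
Homology-determinedness makes membership in `H^k U` concrete: `Y ∈ H^k U` iff `Y[-k] ∈ U`.
Given an exact sequence `A → B → C → D → E` as in the narrow condition, the cone of
`f[-k] : A[-k] → B[-k]` lies in `U`, since `U` contains `B[-k]` and `A[-k][1] = A[-(k-1)]`,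
and its `k`-th cohomology is `coker f`; likewise the cone of `i[-(k+1)]` for `i : D → E` lies
in `U` and has `k`-th cohomology `ker i`. Finally `C` is an extension of `ker i` by `coker f`,
and `H^k U` is closed under extensions because `U` is.
-/

section ExactSequence

variable {C : Type*} [Category C] [Abelian C]

lemma _root_.CategoryTheory.ComposableArrows.Exact.shortExact_cokernelDesc_kernelLift
    {S : ComposableArrows C 4} (hS : S.Exact) :
    (ShortComplex.mk (cokernel.desc (S.map' 0 1) (S.map' 1 2) (hS.toIsComplex.zero 0))
      (kernel.lift (S.map' 3 4) (S.map' 2 3) (hS.toIsComplex.zero 2))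
      (by ext; simpa using hS.toIsComplex.zero 1)).ShortExact where
  mono_f := (hS.exact 0).mono_cokernelDesc
  epi_g := (hS.exact 2).epi_kernelLift
  exact := by
    let S₁ := ShortComplex.mk (S.map' 1 2) (kernel.lift (S.map' 3 4) (S.map' 2 3)
      (hS.toIsComplex.zero 2)) (by ext; simpa using hS.toIsComplex.zero 1)
    refine Iff.mp (ShortComplex.exact_iff_of_epi_of_isIso_of_mono (S₁ := S₁)
      { τ₁ := cokernel.π _, τ₂ := 𝟙 _, τ₃ := 𝟙 _ }) ?_
    exact Iff.mpr (ShortComplex.exact_iff_of_epi_of_isIso_of_mono (S₂ := S.sc hS.toIsComplex 1)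
      { τ₁ := 𝟙 _, τ₂ := 𝟙 _, τ₃ := kernel.ι _ }) (hS.exact 1)

end ExactSequence

noncomputable def HeartData.shiftNegShiftH0Iso (k : ℤ) :
    hd.ι ⋙ shiftFunctor D (-k) ⋙ shiftFunctor D k ⋙ hd.H0 ≅ 𝟭 A :=
  Functor.isoWhiskerLeft hd.ι ((Functor.associator _ _ _).symm ≪≫
    Functor.isoWhiskerRight (shiftFunctorCompIsoId D (-k) k (neg_add_cancel k)) hd.H0 ≪≫
    hd.H0.leftUnitor) ≪≫ hd.heartIso

section Cone

variable {P Q : A} (f : P ⟶ Q) (k : ℤ) {X : D} {v : (hd.ι.obj Q)⟦-k⟧ ⟶ X}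
  {w : X ⟶ ((hd.ι.obj P)⟦-k⟧)⟦(1 : ℤ)⟧}

lemma HeartData.nonempty_H_iso_cokernel
    (hT : Triangle.mk ((hd.ι.map f)⟦-k⟧') v w ∈ distTriang D) :
    Nonempty (hd.H k X ≅ cokernel f) := by
  have := hd.homological
  let := Functor.ShiftSequence.tautological hd.H0 ℤ
  have hvanish : IsZero ((hd.H0.shift (k + 1)).obj ((hd.ι.obj P)⟦-k⟧)) :=
    hd.LE_vanish _ k (k + 1) (t.le_shift 0 (-k) k (by ring) _ (hd.mem_heart P).1) (by omega)
  have : Epi ((hd.H0.shift k).map (Triangle.mk ((hd.ι.map f)⟦-k⟧') v w).mor₂) :=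
    (hd.H0.homologySequence_exact₃ _ hT k (k + 1) rfl).epi_f (hvanish.eq_of_tgt _ _)
  let e := hd.shiftNegShiftH0Iso k
  have hexact := hd.H0.homologySequence_exact₂ _ hT k
  exact ⟨hexact.gIsCokernel.coconePointUniqueUpToIso (cokernelIsCokernel _) ≪≫
    cokernel.mapIso _ f (e.app P) (e.app Q) (e.hom.naturality f)⟩

lemma HeartData.nonempty_H_pred_iso_kernel
    (hT : Triangle.mk ((hd.ι.map f)⟦-k⟧') v w ∈ distTriang D) :
    Nonempty (hd.H (k - 1) X ≅ kernel f) := by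
  have := hd.homological
  let := Functor.ShiftSequence.tautological hd.H0 ℤ
  have hvanish : IsZero ((hd.H0.shift (k - 1)).obj ((hd.ι.obj Q)⟦-k⟧)) :=
    hd.GE_vanish _ k (k - 1) (t.ge_shift 0 (-k) k (by ring) _ (hd.mem_heart Q).2) (by omega)
  have : Mono (hd.H0.homologySequenceδ _ (k - 1) k (by omega)) :=
    (hd.H0.homologySequence_exact₃ _ hT (k - 1) k (by omega)).mono_g (hvanish.eq_of_src _ _)
  let e := hd.shiftNegShiftH0Iso k
  have hexact := hd.H0.homologySequence_exact₁ _ hT (k - 1) k (by omega)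
  exact ⟨hexact.fIsKernel.conePointUniqueUpToIso (kernelIsKernel _) ≪≫
    kernel.mapIso _ f (e.app P) (e.app Q) (e.hom.naturality f)⟩

end Cone

variable {U : Set D}

lemma mem_HkSet_iff (hU : IsPreaisle U) (hdet : IsHomDet hd U) {k : ℤ} {Y : A} :
    Y ∈ HkSet hd U k ↔ (hd.ι.obj Y)⟦-k⟧ ∈ U := by
  constructor
  · rintro ⟨X, hX, ⟨e⟩⟩
    exact hU.mem_of_iso ((shiftFunctor D (-k)).mapIso (hd.ι.mapIso e.symm)) ((hdet X).1 hX k)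
  · exact fun hY => ⟨_, hY, ⟨((hd.shiftNegShiftH0Iso k).app Y).symm⟩⟩

lemma HkSet_closedUnderExtensions (hU : IsPreaisle U) (hdet : IsHomDet hd U) (k : ℤ) :
    ClosedUnderExtensions (HkSet hd U k) := by
  intro S hS h₁ h₃
  rw [mem_HkSet_iff hd hU hdet] at h₁ h₃ ⊢
  obtain ⟨δ, hT⟩ := (hd.shortExact_iff S).1 hS
  exact hU.ext _ (Triangle.shift_distinguished _ hT (-k)) h₁ h₃

lemma isSubcat_HkSet (hU : IsPreaisle U) (hdet : IsHomDet hd U) (k : ℤ) :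
    IsSubcat (HkSet hd U k) where
  mem_of_iso := by
    rintro Y Y' e ⟨X, hX, ⟨e'⟩⟩
    exact ⟨X, hX, ⟨e.symm ≪≫ e'⟩⟩
  zero_mem := by
    have := hd.H0_additive
    exact ⟨0, hU.zero_mem, ⟨(isZero_zero A).iso
      (hd.H0.map_isZero ((shiftFunctor D k).map_isZero (isZero_zero D)))⟩⟩
  biprod_mem Y Y' hY hY' := HkSet_closedUnderExtensions hd hU hdet k _
    (ShortComplex.Splitting.ofHasBinaryBiproduct Y Y').shortExact hY hY'

lemma HkSet_succ_subset (hU : IsPreaisle U) (hdet : IsHomDet hd U) (k : ℤ) :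
    HkSet hd U (k + 1) ⊆ HkSet hd U k := by
  intro Y hY
  rw [mem_HkSet_iff hd hU hdet] at hY ⊢
  exact hU.mem_of_iso ((shiftFunctorAdd' D (-(k + 1)) 1 (-k) (by ring)).app _).symm (hU.shift hY)

lemma exists_distTriang_mem_of_mem_HkSet (hU : IsPreaisle U) (hdet : IsHomDet hd U) {k : ℤ}
    {P Q : A} (f : P ⟶ Q) (hP : P ∈ HkSet hd U (k - 1)) (hQ : Q ∈ HkSet hd U k) :
    ∃ (X : D) (v : (hd.ι.obj Q)⟦-k⟧ ⟶ X) (w : X ⟶ ((hd.ι.obj P)⟦-k⟧)⟦(1 : ℤ)⟧),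
      X ∈ U ∧ Triangle.mk ((hd.ι.map f)⟦-k⟧') v w ∈ distTriang D := by
  rw [mem_HkSet_iff hd hU hdet] at hP hQ
  obtain ⟨X, v, w, hT⟩ := distinguished_cocone_triangle ((hd.ι.map f)⟦-k⟧')
  have hP' : ((hd.ι.obj P)⟦-k⟧)⟦(1 : ℤ)⟧ ∈ U :=
    hU.mem_of_iso ((shiftFunctorAdd' D (-k) 1 (-(k - 1)) (by ring)).app _) hP
  exact ⟨X, v, w, hU.ext _ (rot_of_distTriang _ hT) hQ hP', hT⟩

lemma cokernel_mem_HkSet (hU : IsPreaisle U) (hdet : IsHomDet hd U) {k : ℤ} {P Q : A}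
    (f : P ⟶ Q) (hP : P ∈ HkSet hd U (k - 1)) (hQ : Q ∈ HkSet hd U k) :
    cokernel f ∈ HkSet hd U k := by
  obtain ⟨X, v, w, hX, hT⟩ := exists_distTriang_mem_of_mem_HkSet hd hU hdet f hP hQ
  obtain ⟨e⟩ := hd.nonempty_H_iso_cokernel f k hT
  exact ⟨X, hX, ⟨e.symm⟩⟩

lemma kernel_mem_HkSet (hU : IsPreaisle U) (hdet : IsHomDet hd U) {k : ℤ} {P Q : A}
    (f : P ⟶ Q) (hP : P ∈ HkSet hd U (k - 1)) (hQ : Q ∈ HkSet hd U k) :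
    kernel f ∈ HkSet hd U (k - 1) := by
  obtain ⟨X, v, w, hX, hT⟩ := exists_distTriang_mem_of_mem_HkSet hd hU hdet f hP hQ
  obtain ⟨e⟩ := hd.nonempty_H_pred_iso_kernel f k hT
  exact ⟨X, hX, ⟨e.symm⟩⟩

/-- **Proposition.** If `U` is a homology-determined preaisle in `D`, then
`μ(U) = {H^k U}_{k∈ℤ}` is a narrow sequence in the heart `H`. -/
theorem isNarrowSequence_HkSet_of_homDet_preaisle
    {D : Type*} [Category D] [Preadditive D] [HasZeroObject D] [HasShift D ℤ]
    [∀ n : ℤ, (shiftFunctor D n).Additive] [Pretriangulated D]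
    {t : Triangulated.TStructure D} {A : Type*} [Category A] [Abelian A]
    (hd : HeartData t A) {U : Set D} (hU : IsPreaisle U) (hdet : IsHomDet hd U) :
    IsNarrowSequence (fun k => HkSet hd U k) := by
  refine ⟨isSubcat_HkSet hd hU hdet, HkSet_succ_subset hd hU hdet, ?_⟩
  intro k S hS hA hB hD hE
  have hcoker := cokernel_mem_HkSet hd hU hdet (S.map' 0 1) hA hB
  have hker := kernel_mem_HkSet hd hU hdet (S.map' 3 4) (k := k + 1)
    (by rwa [add_sub_cancel_right]) hE
  rw [add_sub_cancel_right] at hker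
  exact HkSet_closedUnderExtensions hd hU hdet k _ hS.shortExact_cokernelDesc_kernelLift
    hcoker hker

end ICEPaper
end

section
/- Let {C(k)}_{k∈ℤ} be a sequence of subcategories of an abelian category A. Then {C(k)}_{k∈ℤ} is a narrow sequence in A if and only if it is an ICE sequence in A. -/
open CategoryTheory Limits ZeroObject

namespace ICEPaper

variable {A : Type*} [Category A] [Abelian A]

/-!
Narrow ⇒ ICE: each closure property is the narrow condition applied to a five-term exact
sequence padded with zeros, e.g. `0 → 0 → ker g → X → Y` for kernels, and the image of `f` is
the cokernel of `ker f → X`, where `ker f ∈ C(k-1)`.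

ICE ⇒ narrow: an exact sequence `A → B → C → D → E` yields a short exact sequence
`0 → coker(A → B) → C → ker(D → E) → 0`. The kernel lies in `C(k)` because `E ∈ C(k+1) ⊆ αC(k)`.
The cokernel lies in `C(k)` because it is a quotient of `B` inside `αC(k-1)`, and `αC` is closed
under cokernels of morphisms from `C`: for `f : C' → coker a`, the pullback of `B ↠ coker a`
along `f` is an extension of `C'` by `image a`, and its map to `B` has the same kernel as `f`.
-/

lemma exact_mk₄_s6 {X₀ X₁ X₂ X₃ X₄ : A} (f : X₀ ⟶ X₁) (g : X₁ ⟶ X₂) (h : X₂ ⟶ X₃) (i : X₃ ⟶ X₄)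
    (w₁ : f ≫ g = 0) (w₂ : g ≫ h = 0) (w₃ : h ≫ i = 0)
    (e₁ : (ShortComplex.mk f g w₁).Exact) (e₂ : (ShortComplex.mk g h w₂).Exact)
    (e₃ : (ShortComplex.mk h i w₃).Exact) :
    (ComposableArrows.mk₄ f g h i).Exact := by
  refine ⟨⟨fun j hj => ?_⟩, fun j hj => ?_⟩
  · match j, hj with
    | 0, _ => exact w₁
    | 1, _ => exact w₂
    | 2, _ => exact w₃
  · match j, hj with
    | 0, _ => exact e₁
    | 1, _ => exact e₂
    | 2, _ => exact e₃

lemma ClosedUnderExtensions.obj_two_mem_of_exact {D : Set A} (hD : ClosedUnderExtensions D)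
    {S : ComposableArrows A 4} (hS : S.Exact) (h₁ : cokernel (S.map' 0 1) ∈ D)
    (h₃ : kernel (S.map' 3 4) ∈ D) : S.obj' 2 ∈ D := by
  have w₀ : S.map' 1 2 ≫ S.map' 2 3 = 0 := hS.toIsComplex.zero 1
  let f' : cokernel (S.map' 0 1) ⟶ S.obj' 2 := cokernel.desc _ (S.map' 1 2) (hS.toIsComplex.zero 0)
  let g' : S.obj' 2 ⟶ kernel (S.map' 3 4) := kernel.lift _ (S.map' 2 3) (hS.toIsComplex.zero 2)
  have w₁ : f' ≫ S.map' 2 3 = 0 := by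
    rw [← cancel_epi (cokernel.π (S.map' 0 1))]
    simp [f', w₀]
  have w₂ : f' ≫ g' = 0 := by
    rw [← cancel_mono (kernel.ι (S.map' 3 4))]
    simp [g', w₁]
  have hf' : Mono f' := (ShortComplex.exact_iff_mono_cokernel_desc _).1 (hS.exact' 0 1 2)
  have hg' : Epi g' := (ShortComplex.exact_iff_epi_kernel_lift _).1 (hS.exact' 2 3 4)
  have ex₁ : (ShortComplex.mk f' (S.map' 2 3) w₁).Exact :=
    (ShortComplex.exact_iff_of_epi_of_isIso_of_mono
      (ShortComplex.Hom.mk (cokernel.π _) (𝟙 _) (𝟙 _) (by simp [f']) (by simp) :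
        ShortComplex.mk (S.map' 1 2) (S.map' 2 3) w₀ ⟶ ShortComplex.mk f' (S.map' 2 3) w₁)).1
      (hS.exact' 1 2 3)
  have ex₂ : (ShortComplex.mk f' g' w₂).Exact :=
    (ShortComplex.exact_iff_of_epi_of_isIso_of_mono
      (ShortComplex.Hom.mk (𝟙 _) (𝟙 _) (kernel.ι _) (by simp) (by simp [g']) :
        ShortComplex.mk f' g' w₂ ⟶ ShortComplex.mk f' (S.map' 2 3) w₁)).2 ex₁
  exact hD _ (ShortComplex.ShortExact.mk' ex₂ hf' hg') h₁ h₃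

namespace IsNarrowSequence

variable {C : ℤ → Set A}

lemma mem_of_exact_of_mono (hC : IsNarrowSequence C) (k : ℤ) {S : ShortComplex A}
    (hS : S.Exact) [Mono S.f] (h₂ : S.X₂ ∈ C k) (h₃ : S.X₃ ∈ C (k + 1)) : S.X₁ ∈ C k :=
  hC.narrow k (ComposableArrows.mk₄ (0 : (0 : A) ⟶ 0) 0 S.f S.g)
    (exact_mk₄_s6 _ _ _ _ (by simp) (by simp) S.zero
      (ShortComplex.exact_of_isZero_X₂ _ (isZero_zero A))
      ((ShortComplex.exact_iff_mono _ rfl).2 ‹_›) hS)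
    (hC.subcat _).zero_mem (hC.subcat k).zero_mem h₂ h₃

lemma mem_of_exact_of_epi (hC : IsNarrowSequence C) (k : ℤ) {S : ShortComplex A}
    (hS : S.Exact) [Epi S.g] (h₁ : S.X₁ ∈ C (k - 1)) (h₂ : S.X₂ ∈ C k) : S.X₃ ∈ C k :=
  hC.narrow k (ComposableArrows.mk₄ S.f S.g (0 : S.X₃ ⟶ 0) (0 : (0 : A) ⟶ 0))
    (exact_mk₄_s6 _ _ _ _ S.zero (by simp) (by simp) hS
      ((ShortComplex.exact_iff_epi _ rfl).2 ‹_›)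
      (ShortComplex.exact_of_isZero_X₂ _ (isZero_zero A)))
    h₁ h₂ (hC.subcat k).zero_mem (hC.subcat _).zero_mem

lemma closedUnderExtensions (hC : IsNarrowSequence C) (k : ℤ) :
    ClosedUnderExtensions (C k) := fun S hS h₁ h₃ =>
  have := hS.mono_f
  have := hS.epi_g
  hC.narrow k (ComposableArrows.mk₄ (0 : (0 : A) ⟶ S.X₁) S.f S.g (0 : S.X₃ ⟶ 0))
    (exact_mk₄_s6 _ _ _ _ (by simp) S.zero (by simp)
      ((ShortComplex.exact_iff_mono _ rfl).2 ‹_›) hS.exact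
      ((ShortComplex.exact_iff_epi _ rfl).2 ‹_›))
    (hC.subcat _).zero_mem h₁ h₃ (hC.subcat _).zero_mem

lemma kernel_mem (hC : IsNarrowSequence C) {k : ℤ} {X Y : A} (f : X ⟶ Y) (hX : X ∈ C k)
    (hY : Y ∈ C (k + 1)) : kernel f ∈ C k :=
  hC.mem_of_exact_of_mono k (ShortComplex.kernelSequence_exact f) hX hY

lemma cokernel_mem (hC : IsNarrowSequence C) {k : ℤ} {X Y : A} (f : X ⟶ Y)
    (hX : X ∈ C (k - 1)) (hY : Y ∈ C k) : cokernel f ∈ C k :=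
  hC.mem_of_exact_of_epi k (ShortComplex.cokernelSequence_exact f) hX hY

lemma isICEClosed (hC : IsNarrowSequence C) (k : ℤ) : IsICEClosed (C k) where
  subcat := hC.subcat k
  im X Y f hX hY := by
    have hX' : X ∈ C (k - 1) := hC.decreasing (k - 1) (by simpa using hX)
    have hker : kernel f ∈ C (k - 1) := hC.kernel_mem f hX' (by simpa using hY)
    exact (hC.subcat k).mem_of_iso (Abelian.coimageIsoImage' f) (hC.cokernel_mem _ hker hX)
  coker X Y f hX hY := hC.cokernel_mem f (hC.decreasing (k - 1) (by simpa using hX)) hY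
  ext := hC.closedUnderExtensions k

lemma isTorsionClassIn_alphaSub (hC : IsNarrowSequence C) (k : ℤ) :
    IsTorsionClassIn (alphaSub (C k)) (C (k + 1)) where
  subset X hX := ⟨hC.decreasing k hX, fun _ f hC' => hC.kernel_mem f hC' hX⟩
  subcat := hC.subcat (k + 1)
  ext := hC.closedUnderExtensions (k + 1)
  quot X Y g _ hX hY := by
    have : Epi (ShortComplex.kernelSequence g).g := ‹Epi g›
    exact hC.mem_of_exact_of_epi (k + 1) (ShortComplex.kernelSequence_exact g)
      (by simpa using hY.2 g (hC.decreasing k hX)) hX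

lemma isICESequence (hC : IsNarrowSequence C) : IsICESequence C :=
  ⟨hC.isICEClosed, hC.isTorsionClassIn_alphaSub⟩

end IsNarrowSequence

lemma IsICEClosed.cokernel_mem_alphaSub {D : Set A} (hD : IsICEClosed D) {X B : A} (a : X ⟶ B)
    (hX : X ∈ D) (hB : B ∈ alphaSub D) : cokernel a ∈ alphaSub D := by
  refine ⟨hD.coker a hX hB.1, fun C' f hC' => ?_⟩
  have sq := IsPullback.of_hasPullback f (cokernel.π a)
  have := isIso_kernel_map_of_isPullback sq
  have := isIso_kernel_map_of_isPullback sq.flip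
  have hker : kernel (pullback.fst f (cokernel.π a)) ∈ D :=
    hD.subcat.mem_of_iso (asIso (kernel.map _ _ _ _ sq.w)).symm
      (hD.subcat.mem_of_iso (Abelian.imageIsoImage a).symm (hD.im a hX hB.1))
  have hP : pullback f (cokernel.π a) ∈ D :=
    hD.ext _ (.mk' (ShortComplex.kernelSequence_exact _) inferInstance
      (inferInstanceAs (Epi (pullback.fst f (cokernel.π a))))) hker hC'
  exact hD.subcat.mem_of_iso (asIso (kernel.map _ _ _ _ sq.flip.w)) (hB.2 _ hP)

namespace IsICESequence

variable {C : ℤ → Set A}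

lemma kernel_mem (hC : IsICESequence C) {k : ℤ} {X Y : A} (f : X ⟶ Y) (hX : X ∈ C k)
    (hY : Y ∈ C (k + 1)) : kernel f ∈ C k :=
  ((hC.tors k).subset hY).2 f hX

lemma cokernel_mem (hC : IsICESequence C) {k : ℤ} {X Y : A} (f : X ⟶ Y)
    (hX : X ∈ C (k - 1)) (hY : Y ∈ C k) : cokernel f ∈ C k := by
  obtain ⟨j, rfl⟩ : ∃ j, k = j + 1 := ⟨k - 1, by omega⟩
  rw [add_sub_cancel_right] at hX
  have hYα := (hC.tors j).subset hY
  exact (hC.tors j).quot (cokernel.π f) inferInstance hY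
    ((hC.ice j).cokernel_mem_alphaSub f hX hYα)

lemma narrowCondition (hC : IsICESequence C) : NarrowCondition C :=
  fun k _ hS h₀ h₁ h₃ h₄ => (hC.ice k).ext.obj_two_mem_of_exact hS
    (hC.cokernel_mem _ h₀ h₁) (hC.kernel_mem _ h₃ h₄)

lemma isNarrowSequence (hC : IsICESequence C) : IsNarrowSequence C :=
  ⟨fun k => (hC.ice k).subcat, fun k _ hX => ((hC.tors k).subset hX).1, hC.narrowCondition⟩

end IsICESequence

/-- **Proposition.** A sequence `{C(k)}_{k∈ℤ}` of subcategories of an abelian category `A`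
is a narrow sequence if and only if it is an ICE sequence. -/
theorem isNarrowSequence_iff_isICESequence {A : Type*} [Category A] [Abelian A]
    (C : ℤ → Set A) :
    IsNarrowSequence C ↔ IsICESequence C :=
  ⟨IsNarrowSequence.isICESequence, IsICESequence.isNarrowSequence⟩

end ICEPaper
end

section
/- Assume the t-structure (D^{≤0}, D^{≥1}) is bounded. Then a thick subcategory E of D is H^0-stable if and only if it is homology-determined. -/
open CategoryTheory Limits ZeroObject

namespace ICEPaper

open Pretriangulated Triangulated

variable {D : Type*} [Category D] [Preadditive D] [HasZeroObject D] [HasShift D ℤ]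
  [∀ n : ℤ, (shiftFunctor D n).Additive] [Pretriangulated D]

variable (t : TStructure D)

variable {t} {A : Type*} [Category A] [Abelian A] (hd : HeartData t A)

/-!
Since `H^k X = H⁰(X⟦k⟧)`, an `H⁰`-stable thick subcategory contains `H^k X⟦-k⟧` for each of its
objects `X`, and conversely the case `k = 0` of homology-determinedness is `H⁰`-stability.
What remains is that a thick subcategory contains every bounded `X` all of whose shifted
cohomologies `H^k X⟦-k⟧` it contains. If `X ≤ n`, the truncation triangle
`τ_{≤ n-1} X → X → τ_{≥ n} X` exhibits `X` as an extension of `τ_{≥ n} X ≅ H^n X⟦-n⟧` by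
`τ_{≤ n-1} X`, whose cohomology agrees with that of `X` in degrees `< n` and vanishes above;
induction on `n` concludes.
-/

section HomologicalFunctor

variable (H : D ⥤ A) [H.IsHomological]

lemma isIso_map_mor₁_of_isZero {T : Triangle D} (hT : T ∈ distTriang D)
    (h₃ : IsZero (H.obj T.obj₃)) (h₃' : IsZero (H.obj (T.obj₃⟦(-1 : ℤ)⟧))) :
    IsIso (H.map T.mor₁) := by
  have : Mono (H.map T.mor₁) :=
    (H.map_distinguished_exact _ (inv_rot_of_distTriang T hT)).mono_g (h₃'.eq_of_src _ _)
  have : Epi (H.map T.mor₁) := (H.map_distinguished_exact T hT).epi_f (h₃.eq_of_tgt _ _)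
  exact isIso_of_mono_of_epi _

lemma isIso_map_mor₂_of_isZero {T : Triangle D} (hT : T ∈ distTriang D)
    (h₁ : IsZero (H.obj T.obj₁)) (h₁' : IsZero (H.obj (T.obj₁⟦(1 : ℤ)⟧))) :
    IsIso (H.map T.mor₂) := by
  have : Mono (H.map T.mor₂) := (H.map_distinguished_exact T hT).mono_g (h₁.eq_of_src _ _)
  have : Epi (H.map T.mor₂) :=
    (H.map_distinguished_exact _ (rot_of_distTriang T hT)).epi_f (h₁'.eq_of_tgt _ _)
  exact isIso_of_mono_of_epi _

end HomologicalFunctor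

namespace HeartData

lemma nonempty_shift_ι_H_iso {n : ℤ} {X : D} (hle : t.le n X) (hge : t.ge n X) :
    Nonempty ((hd.ι.obj (hd.H n X))⟦-n⟧ ≅ X) := by
  obtain ⟨Y, ⟨e⟩⟩ := hd.heart_mem (X⟦n⟧)
    ⟨t.le_shift n n 0 (add_zero n) X hle, t.ge_shift n n 0 (add_zero n) X hge⟩
  exact ⟨(shiftFunctor D (-n)).mapIso
      (hd.ι.mapIso ((hd.H0.mapIso e).symm ≪≫ hd.heartIso.app Y) ≪≫ e) ≪≫
    ((shiftEquiv D n).unitIso.app X).symm⟩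

lemma nonempty_H_obj₁_iso_obj₂ {T : Triangle D} (hT : T ∈ distTriang D) {n k : ℤ}
    (h₃ : t.ge n T.obj₃) (hk : k < n) : Nonempty (hd.H k T.obj₁ ≅ hd.H k T.obj₂) := by
  have := hd.homological
  have := isIso_map_mor₁_of_isZero hd.H0 (Triangle.shift_distinguished T hT k)
    (hd.GE_vanish _ n k h₃ hk)
    (hd.GE_vanish _ (n - k) (-1) (t.ge_shift n k (n - k) (by omega) _ h₃) (by omega))
  exact ⟨(asIso (hd.H0.map (T⟦k⟧).mor₁) :)⟩

lemma nonempty_H_obj₂_iso_obj₃ {T : Triangle D} (hT : T ∈ distTriang D) {n k : ℤ}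
    (h₁ : t.le n T.obj₁) (hk : n < k) : Nonempty (hd.H k T.obj₂ ≅ hd.H k T.obj₃) := by
  have := hd.homological
  have := isIso_map_mor₂_of_isZero hd.H0 (Triangle.shift_distinguished T hT k)
    (hd.LE_vanish _ n k h₁ hk)
    (hd.LE_vanish _ (n - k) 1 (t.le_shift n k (n - k) (by omega) _ h₁) (by omega))
  exact ⟨(asIso (hd.H0.map (T⟦k⟧).mor₂) :)⟩

variable {P : ObjectProperty D} [P.IsClosedUnderIsomorphisms]

lemma prop_shift_ι_H_obj₁ [P.ContainsZero] {T : Triangle D} (hT : T ∈ distTriang D) {n : ℤ}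
    (h₁ : t.le n T.obj₁) (h₃ : t.ge (n + 1) T.obj₃)
    (h₂ : ∀ k, P ((hd.ι.obj (hd.H k T.obj₂))⟦-k⟧)) (k : ℤ) :
    P ((hd.ι.obj (hd.H k T.obj₁))⟦-k⟧) := by
  by_cases hk : k ≤ n
  · obtain ⟨e⟩ := hd.nonempty_H_obj₁_iso_obj₂ hT h₃ (Int.lt_add_one_iff.2 hk)
    exact P.prop_of_iso ((shiftFunctor D (-k)).mapIso (hd.ι.mapIso e.symm)) (h₂ k)
  · have := hd.additive
    exact P.prop_of_isZero ((shiftFunctor D (-k)).map_isZero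
      (hd.ι.map_isZero (hd.LE_vanish _ n k h₁ (not_le.1 hk))))

lemma prop_of_forall_prop_shift_ι_H [P.ContainsZero] [P.IsTriangulatedClosed₂] {m n : ℤ}
    (hmn : m ≤ n) {X : D} (hn : t.le n X) (hm : t.ge m X)
    (hX : ∀ k, P ((hd.ι.obj (hd.H k X))⟦-k⟧)) : P X := by
  induction n, hmn using Int.leInduction generalizing X with
  | base =>
    obtain ⟨e⟩ := hd.nonempty_shift_ι_H_iso hn hm
    exact P.prop_of_iso e (hX m)
  | succ n hmn ih =>
    obtain ⟨F, G, hF, hG, _, _, _, hT⟩ := t.exists_triangle X n (n + 1) rfl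
    have hGle : t.le (n + 1) G := (t.isLE₂ _ (rot_of_distTriang _ hT) (n + 1) ⟨hn⟩
      ⟨t.le_monotone (by omega : n - 1 ≤ n + 1) _ (t.le_shift n 1 (n - 1) (by omega) F hF)⟩).le
    have hPG : P G := by
      obtain ⟨e⟩ := hd.nonempty_shift_ι_H_iso hGle hG
      obtain ⟨e'⟩ := hd.nonempty_H_obj₂_iso_obj₃ hT hF (lt_add_one n)
      exact P.prop_of_iso ((shiftFunctor D _).mapIso (hd.ι.mapIso e') ≪≫ e) (hX (n + 1))
    have hFge : t.ge m F := (t.isGE₂ _ (inv_rot_of_distTriang _ hT) m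
      ⟨t.ge_antitone (by omega : m ≤ n + 2) _ (t.ge_shift (n + 1) (-1) (n + 2) (by omega) G hG)⟩
      ⟨hm⟩).ge
    exact P.ext_of_isTriangulatedClosed₂ _ hT
      (ih hF hFge (hd.prop_shift_ι_H_obj₁ hT hF hG hX)) hPG

end HeartData

namespace IsThick

variable {E : Set D}

lemma isClosedUnderIsomorphisms (hE : IsThick E) : ObjectProperty.IsClosedUnderIsomorphisms E :=
  ⟨fun e hX => hE.mem_of_iso e hX⟩

lemma containsZero (hE : IsThick E) : ObjectProperty.ContainsZero E :=
  ⟨⟨0, isZero_zero D, hE.zero_mem⟩⟩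

lemma isTriangulatedClosed₂ (hE : IsThick E) : ObjectProperty.IsTriangulatedClosed₂ E :=
  have := hE.isClosedUnderIsomorphisms
  .mk' hE.ext

end IsThick

lemma H0Stable.mem_shiftSet_H {E : Set D} (hE : IsThick E) (hs : H0Stable hd E) {X : D}
    (hX : X ∈ E) (k : ℤ) : hd.ι.obj (hd.H k X) ∈ shiftSet E k :=
  hE.shift (-k) (hE.mem_of_iso (hd.ι.mapIso (hd.H0.mapIso ((shiftFunctorZero D ℤ).app (X⟦k⟧))))
    (hs _ (hE.shift k hX)))

lemma IsHomDet.h0Stable {E : Set D} (hE : IsThick E) (hh : IsHomDet hd E) :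
    H0Stable hd E := by
  intro X hX
  have h : (hd.ι.obj (hd.H 0 X))⟦-(0 : ℤ)⟧ ∈ E := (hh X).1 hX 0
  rw [neg_zero] at h
  exact hE.mem_of_iso ((shiftFunctorZero D ℤ).app _) h

/-- **Proposition.** Assume the t-structure is bounded. Then a thick subcategory `E` of `D`
is `H⁰`-stable if and only if it is homology-determined. -/
theorem h0Stable_iff_isHomDet_of_thick
    {D : Type*} [Category D] [Preadditive D] [HasZeroObject D] [HasShift D ℤ]
    [∀ n : ℤ, (shiftFunctor D n).Additive] [Pretriangulated D]
    {t : Triangulated.TStructure D} {A : Type*} [Category A] [Abelian A]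
    (hd : HeartData t A) (hbdd : BoundedT t) {E : Set D} (hE : IsThick E) :
    H0Stable hd E ↔ IsHomDet hd E := by
  have := hE.isClosedUnderIsomorphisms
  have := hE.containsZero
  have := hE.isTriangulatedClosed₂
  refine ⟨fun hs X => ⟨fun hX => hs.mem_shiftSet_H hd hE hX, fun hX => ?_⟩,
    fun hh => hh.h0Stable hd hE⟩
  obtain ⟨⟨n, hn⟩, ⟨m, hm⟩⟩ := hbdd X
  exact hd.prop_of_forall_prop_shift_ι_H (P := E) (min_le_right m n) hn
    (t.ge_antitone (min_le_left m n) X hm) hX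

end ICEPaper
end
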